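/- Let F(x) := ∫₀ˣ (1−t⁶)^{−1/2} dt and let s := ((3√3−5)/4)^{1/6}. Then F(s) = F(1)/2. (Equivalently, sin_{2,6}⁶(π_{2,6}/4) = (3√3−5)/4.) -/

import Mathlib

/-- `F = F_{2,6}`, the incomplete integral `∫₀ˣ (1−t⁶)^{−1/2} dt`. -/
noncomputable def F26 (x : ℝ) : ℝ := ∫ t in (0:ℝ)..x, (1 - t ^ 6) ^ (-(1/2) : ℝ)

/-!
The map `φ x = √((1 - x²) / (1 + 2x²))` sends `[0, 1]` to itself with `φ 0 = 1`, and the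
substitution `t = φ x` turns `(1 - t⁶)^{-1/2} dt` into `-(1 - x⁶)^{-1/2} dx`: after squaring this
is a rational identity. Hence `F x + F (φ x) = F 1` on `[0, 1]`, so `F s = F 1 / 2` at the fixed
point `s` of `φ`, which is `s = √d` with `2d² + 2d = 1`, i.e. `d = (√3 - 1)/2` and
`s⁶ = d³ = (3√3 - 5)/4`.
-/

open Set MeasureTheory intervalIntegral

theorem intervalIntegrable_one_sub_pow_rpow {n : ℕ} (hn : n ≠ 0) {r : ℝ} (hr₁ : -1 < r)
    (hr₀ : r ≤ 0) : IntervalIntegrable (fun t : ℝ => (1 - t ^ n) ^ r) volume 0 1 := by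
  have hbound : IntervalIntegrable (fun t : ℝ => (1 - t) ^ r) volume 0 1 := by
    simpa using ((intervalIntegrable_rpow' hr₁ (a := 0) (b := 1)).comp_sub_left 1).symm
  refine hbound.mono_fun' (Measurable.aestronglyMeasurable (by fun_prop)) ?_
  filter_upwards [ae_restrict_mem measurableSet_uIoc] with t ht
  rw [uIoc_of_le zero_le_one] at ht
  have hpow : t ^ n ≤ t := pow_le_of_le_one ht.1.le ht.2 hn
  have hpow₁ : t ^ n ≤ 1 := pow_le_one₀ ht.1.le ht.2
  rw [Real.norm_eq_abs, abs_of_nonneg (Real.rpow_nonneg (by linarith) _)]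
  rcases ht.2.lt_or_eq with ht1 | rfl
  · exact Real.rpow_le_rpow_of_nonpos (by linarith) (by linarith) hr₀
  · simp

theorem Real.rpow_neg_half_sq {z : ℝ} (hz : 0 ≤ z) : (z ^ (-(1/2) : ℝ)) ^ 2 = z⁻¹ := by
  rw [← Real.rpow_natCast, ← Real.rpow_mul hz]
  norm_num [Real.rpow_neg_one]

namespace F26

theorem intervalIntegrable_integrand :
    IntervalIntegrable (fun t : ℝ => (1 - t ^ 6) ^ (-(1/2) : ℝ)) volume 0 1 :=
  intervalIntegrable_one_sub_pow_rpow (by norm_num) (by norm_num) (by norm_num)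

theorem hasDerivAt {x : ℝ} (hx : x ∈ Ioo 0 1) :
    HasDerivAt F26 ((1 - x ^ 6) ^ (-(1/2) : ℝ)) x := by
  have hx6 : x ^ 6 < 1 := pow_lt_one₀ hx.1.le hx.2 (by norm_num)
  refine integral_hasDerivAt_right
    (intervalIntegrable_integrand.mono_set (uIcc_subset_uIcc left_mem_uIcc ?_))
    (Measurable.aestronglyMeasurable (by fun_prop)).stronglyMeasurableAtFilter ?_
  · rw [uIcc_of_le zero_le_one]; exact Ioo_subset_Icc_self hx
  · exact ContinuousAt.rpow_const (by fun_prop) (Or.inl (by linarith))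

theorem continuousOn : ContinuousOn F26 (Icc 0 1) := by
  have h := continuousOn_primitive_interval (μ := volume) (a := 0) (b := 1)
    (f := fun t : ℝ => (1 - t ^ 6) ^ (-(1/2) : ℝ)) <| by
    rw [uIcc_of_le zero_le_one, integrableOn_Icc_iff_integrableOn_Ioc]
    exact intervalIntegrable_integrand.1
  rwa [uIcc_of_le zero_le_one] at h

end F26

noncomputable def complement26 (x : ℝ) : ℝ := √((1 - x ^ 2) / (1 + 2 * x ^ 2))

theorem complement26_zero : complement26 0 = 1 := by
  simp [complement26]

theorem continuous_complement26 : Continuous complement26 :=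
  .sqrt <| .div (by fun_prop) (by fun_prop) fun x => by positivity

theorem mapsTo_complement26 : MapsTo complement26 (Icc 0 1) (Icc 0 1) := fun x _ =>
  ⟨Real.sqrt_nonneg _, Real.sqrt_le_one.2 <| (div_le_one (by positivity)).2 (by nlinarith)⟩

theorem complement26_mem_Ioo {x : ℝ} (hx : x ∈ Ioo 0 1) : complement26 x ∈ Ioo 0 1 := by
  have hB : 0 < 1 + 2 * x ^ 2 := by positivity
  refine ⟨Real.sqrt_pos.2 (div_pos (by nlinarith [hx.1, hx.2]) hB), ?_⟩
  rw [complement26, Real.sqrt_lt' one_pos, one_pow, div_lt_one hB]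
  nlinarith [hx.1]

theorem complement26_sq {x : ℝ} (hx : x ^ 2 ≤ 1) :
    complement26 x ^ 2 = (1 - x ^ 2) / (1 + 2 * x ^ 2) :=
  Real.sq_sqrt (div_nonneg (by linarith) (by positivity))

theorem hasDerivAt_complement26 {x : ℝ} (hx : x ^ 2 < 1) :
    HasDerivAt complement26 (-6 * x / (1 + 2 * x ^ 2) ^ 2 / (2 * complement26 x)) x := by
  have hB : 1 + 2 * x ^ 2 ≠ 0 := by positivity
  have hu : HasDerivAt (fun y : ℝ => (1 - y ^ 2) / (1 + 2 * y ^ 2))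
      (-6 * x / (1 + 2 * x ^ 2) ^ 2) x := by
    refine (((hasDerivAt_pow 2 x).const_sub 1).div
      (((hasDerivAt_pow 2 x).const_mul 2).const_add 1) hB).congr_deriv ?_
    norm_num
    ring
  exact hu.sqrt (div_pos (by linarith) (by positivity)).ne'

theorem integrand_complement26_mul_deriv {x : ℝ} (hx : x ∈ Ioo 0 1) :
    (1 - complement26 x ^ 6) ^ (-(1/2) : ℝ) *
        (-6 * x / (1 + 2 * x ^ 2) ^ 2 / (2 * complement26 x)) =
      -(1 - x ^ 6) ^ (-(1/2) : ℝ) := by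
  obtain ⟨hx₀, hx₁⟩ := hx
  obtain ⟨hy₀, hy₁⟩ := complement26_mem_Ioo ⟨hx₀, hx₁⟩
  set y := complement26 x
  have hy : y ^ 2 = (1 - x ^ 2) / (1 + 2 * x ^ 2) := complement26_sq (by nlinarith)
  have hx6 : 0 < 1 - x ^ 6 := by have := pow_lt_one₀ hx₀.le hx₁ (n := 6) (by norm_num); linarith
  have hy6 : 0 < 1 - y ^ 6 := by have := pow_lt_one₀ hy₀.le hy₁ (n := 6) (by norm_num); linarith
  have hy6' : 1 - y ^ 6 = 9 * x ^ 2 * (1 + x ^ 2 + x ^ 4) / (1 + 2 * x ^ 2) ^ 3 := by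
    rw [show y ^ 6 = (y ^ 2) ^ 3 by ring, hy]
    field_simp
    ring
  have hx6' : 1 - x ^ 6 = (1 - x ^ 2) * (1 + x ^ 2 + x ^ 4) := by ring
  have hx2 : 0 < 1 - x ^ 2 := by nlinarith
  -- both sides are negative, so it suffices to compare their squares, which are rational
  rw [← neg_inj, neg_neg, ← sq_eq_sq₀ ?_ (Real.rpow_nonneg hx6.le _)]
  · rw [neg_sq, mul_pow, Real.rpow_neg_half_sq hy6.le, Real.rpow_neg_half_sq hx6.le, div_pow,
      mul_pow, hy, hy6', hx6']
    field_simp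
    ring
  · exact neg_nonneg.2 (mul_nonpos_of_nonneg_of_nonpos (Real.rpow_nonneg hy6.le _)
      (div_nonpos_of_nonpos_of_nonneg (div_nonpos_of_nonpos_of_nonneg (by linarith) (by positivity))
        (by positivity)))

theorem F26_add_F26_complement26 {x : ℝ} (hx : x ∈ Icc 0 1) :
    F26 x + F26 (complement26 x) = F26 1 := by
  set H := fun y => F26 y + F26 (complement26 y)
  have hH0 : H 0 = F26 1 := by simp [H, complement26_zero, F26]
  rcases hx.1.eq_or_lt with rfl | hx₀
  · exact hH0
  have hcont : ContinuousOn H (Icc 0 x) :=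
    (F26.continuousOn.add (F26.continuousOn.comp continuous_complement26.continuousOn
      mapsTo_complement26)).mono (Icc_subset_Icc_right hx.2)
  have hderiv : ∀ y ∈ Ioo 0 x, HasDerivAt H 0 y := fun y hy => by
    have hy : y ∈ Ioo 0 1 := ⟨hy.1, hy.2.trans_le hx.2⟩
    have := (F26.hasDerivAt hy).add ((F26.hasDerivAt (complement26_mem_Ioo hy)).comp y
      (hasDerivAt_complement26 (by nlinarith [hy.1, hy.2])))
    rwa [integrand_complement26_mul_deriv hy, add_neg_cancel] at this
  obtain ⟨c, -, hc⟩ := exists_hasDerivAt_eq_slope H (fun _ => 0) hx₀ hcont hderiv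
  rwa [eq_div_iff (sub_ne_zero.2 hx₀.ne'), zero_mul, eq_comm, sub_eq_zero, hH0] at hc

theorem F26_eq_half_of_complement26_eq {x : ℝ} (hx : x ∈ Icc 0 1) (hfix : complement26 x = x) :
    F26 x = F26 1 / 2 := by
  have := F26_add_F26_complement26 hx
  rw [hfix] at this
  linarith

theorem complement26_sqrt {d : ℝ} (hd : 0 ≤ d) (h : 2 * d ^ 2 + 2 * d = 1) :
    complement26 √d = √d := by
  rw [complement26, Real.sq_sqrt hd]
  congr 1
  rw [div_eq_iff (by positivity)]
  linarith

/-- `sin_{2,6}⁶(π_{2,6}/4) = (3√3−5)/4`. -/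
theorem sin_two_six_at_quarter_pi :
    F26 (((3 * Real.sqrt 3 - 5) / 4) ^ ((1:ℝ)/6)) = F26 1 / 2 := by
  have h3 : √3 ^ 2 = 3 := Real.sq_sqrt (by norm_num)
  have hd₀ : 0 ≤ (√3 - 1) / 2 := by nlinarith [Real.sqrt_nonneg 3]
  have hd : 2 * ((√3 - 1) / 2) ^ 2 + 2 * ((√3 - 1) / 2) = 1 := by linear_combination h3 / 2
  have hs : ((3 * √3 - 5) / 4) ^ ((1:ℝ)/6) = √((√3 - 1) / 2) := by
    rw [show (3 * √3 - 5) / 4 = ((√3 - 1) / 2) ^ 3 by linear_combination (3 - √3) * h3 / 8,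
      ← Real.rpow_natCast, ← Real.rpow_mul hd₀, Real.sqrt_eq_rpow ((√3 - 1) / 2)]
    norm_num
  rw [hs]
  exact F26_eq_half_of_complement26_eq ⟨Real.sqrt_nonneg _, Real.sqrt_le_one.2 (by nlinarith)⟩
    (complement26_sqrt hd₀ hd)
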